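/- arXiv:2401.03110 — 2 statements merged into one kernel-verified Lean document; each statement's English description precedes it below -/
import Mathlib

section
/- Let G = S_{n-q} × S_q ≤ S_n with n-q ≥ q ≥ 1. The set S of products ∏_{i=1}^{d} (k_i, l_i) of disjoint transpositions with 0 ≤ d ≤ q, k_1 < k_2 < ⋯ < k_d in {1,…,n-q}, and l_1 < l_2 < ⋯ < l_d in {n-q+1,…,n}, is a complete set of representatives for the left cosets G\S_n. -/
open scoped Pointwise

/-- The Young subgroup `G = S_{n-q} × S_q` of `S_n`, as the stabilizer of the block
`{1,…,n-q}` (hence also of `{n-q+1,…,n}`). -/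
def youngSubgroup (n q : ℕ) : Subgroup (Equiv.Perm (Fin n)) :=
  MulAction.stabilizer (Equiv.Perm (Fin n)) ({x : Fin n | (x : ℕ) < n - q} : Set (Fin n))

/-- The set `S` of products `∏_{i=1}^{d} (k_i, l_i)` of disjoint transpositions with
`0 ≤ d ≤ q`, `k_1 < ⋯ < k_d` in `{1,…,n-q}` and `l_1 < ⋯ < l_d` in `{n-q+1,…,n}`. -/
def transpositionReps (n q : ℕ) : Set (Equiv.Perm (Fin n)) :=
  {s | ∃ d : ℕ, d ≤ q ∧ ∃ k l : Fin d → Fin n,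
    StrictMono k ∧ StrictMono l ∧
    (∀ i, (k i : ℕ) < n - q) ∧ (∀ i, n - q ≤ (l i : ℕ)) ∧
    s = (List.ofFn (fun i => Equiv.swap (k i) (l i))).prod}

/-- Action of a product of pairwise disjoint transpositions. -/
private lemma prodSwap_spec {α : Type*} [DecidableEq α] :
    ∀ {d : ℕ} (k l : Fin d → α), Function.Injective k → Function.Injective l →
      (∀ i j, k i ≠ l j) →
      (∀ i, (List.ofFn fun i => Equiv.swap (k i) (l i)).prod (k i) = l i) ∧
      (∀ i, (List.ofFn fun i => Equiv.swap (k i) (l i)).prod (l i) = k i) ∧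
      (∀ x, (∀ i, x ≠ k i) → (∀ i, x ≠ l i) →
        (List.ofFn fun i => Equiv.swap (k i) (l i)).prod x = x) := by
  intro d
  induction d with
  | zero =>
    intro k l _ _ _
    exact ⟨fun i => i.elim0, fun i => i.elim0, fun x _ _ => rfl⟩
  | succ d ih =>
    intro k l hk hl hkl
    have h0 : (List.ofFn fun i : Fin (d+1) => Equiv.swap (k i) (l i)).prod
        = Equiv.swap (k 0) (l 0) *
          (List.ofFn fun i : Fin d => Equiv.swap (k i.succ) (l i.succ)).prod := by
      rw [List.ofFn_succ, List.prod_cons]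
    obtain ⟨H1, H2, H3⟩ := ih (fun i => k i.succ) (fun i => l i.succ)
      (fun a b hab => Fin.succ_injective d (hk hab)) (fun a b hab => Fin.succ_injective d (hl hab))
      (fun a b => hkl a.succ b.succ)
    refine ⟨?_, ?_, ?_⟩
    · intro i
      rw [h0, Equiv.Perm.mul_apply]
      induction i using Fin.cases with
      | zero =>
        rw [H3 (k 0) (fun j => fun h => (Fin.succ_ne_zero j) (hk h).symm)
          (fun j => hkl 0 j.succ), Equiv.swap_apply_left]
      | succ j =>
        rw [H1 j]
        exact Equiv.swap_apply_of_ne_of_ne (fun h => hkl 0 j.succ h.symm)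
          (fun h => (Fin.succ_ne_zero j) (hl h))
    · intro i
      rw [h0, Equiv.Perm.mul_apply]
      induction i using Fin.cases with
      | zero =>
        rw [H3 (l 0) (fun j => fun h => hkl j.succ 0 h.symm)
          (fun j => fun h => (Fin.succ_ne_zero j) (hl h).symm), Equiv.swap_apply_right]
      | succ j =>
        rw [H2 j]
        exact Equiv.swap_apply_of_ne_of_ne (fun h => (Fin.succ_ne_zero j) (hk h))
          (fun h => hkl j.succ 0 h)
    · intro x hx1 hx2
      rw [h0, Equiv.Perm.mul_apply,
        H3 x (fun j => hx1 j.succ) (fun j => hx2 j.succ)]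
      exact Equiv.swap_apply_of_ne_of_ne (hx1 0) (hx2 0)

private lemma mem_young_iff {n q : ℕ} (σ s : Equiv.Perm (Fin n)) :
    σ * s⁻¹ ∈ youngSubgroup n q ↔ ∀ y, ((s y : ℕ) < n - q ↔ (σ y : ℕ) < n - q) := by
  rw [youngSubgroup, MulAction.mem_stabilizer_iff]
  constructor
  · intro h y
    have := Set.ext_iff.mp h (σ y)
    rw [Set.mem_smul_set_iff_inv_smul_mem] at this
    simpa [Equiv.Perm.smul_def, mul_inv_rev, Equiv.Perm.mul_apply] using this
  · intro h
    ext x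
    rw [Set.mem_smul_set_iff_inv_smul_mem]
    have := h (σ⁻¹ x)
    simpa [Equiv.Perm.smul_def, mul_inv_rev, Equiv.Perm.mul_apply] using this

private lemma card_filter_val_lt (n m : ℕ) (h : m ≤ n) :
    (Finset.univ.filter fun y : Fin n => (y : ℕ) < m).card = m := by
  have key : (Finset.univ.filter fun y : Fin n => (y : ℕ) < m).card
      = (Finset.range m).card := by
    refine Finset.card_bij (fun y _ => (y : ℕ)) ?_ ?_ ?_
    · intro a ha; simp only [Finset.mem_filter] at ha; simpa using ha.2
    · intro a _ b _ hab; exact Fin.val_injective hab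
    · intro b hb
      simp only [Finset.mem_range] at hb
      exact ⟨⟨b, lt_of_lt_of_le hb h⟩, by simpa using hb, rfl⟩
  simpa using key

private lemma filter_perm_card {n : ℕ} (σ : Equiv.Perm (Fin n)) (p : Fin n → Prop)
    [DecidablePred p] :
    (Finset.univ.filter fun y => p (σ y)).card = (Finset.univ.filter p).card := by
  refine Finset.card_bij (fun y _ => σ y) ?_ ?_ ?_
  · intro a ha; simpa using (Finset.mem_filter.mp ha).2
  · intro a _ b _ hab; exact σ.injective hab
  · intro b hb
    exact ⟨σ⁻¹ b, by simpa using (Finset.mem_filter.mp hb).2, by simp⟩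

/-- `transpositionReps n q` is a complete set of representatives for the left cosets
`G\S_n` of the Young subgroup `G = S_{n-q} × S_q`: every `σ ∈ S_n` lies in the coset
`G·s` of exactly one element `s` of the set. -/
theorem stmt_3 (n q : ℕ) (hq1 : 1 ≤ q) (hq2 : q ≤ n - q) (σ : Equiv.Perm (Fin n)) :
    ∃! s : Equiv.Perm (Fin n), s ∈ transpositionReps n q ∧ σ * s⁻¹ ∈ youngSubgroup n q := by
  classical
  set K : Finset (Fin n) :=
    Finset.univ.filter fun y => (y : ℕ) < n - q ∧ ¬ (σ y : ℕ) < n - q with hK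
  set L : Finset (Fin n) :=
    Finset.univ.filter fun y => ¬ (y : ℕ) < n - q ∧ (σ y : ℕ) < n - q with hL
  -- card computations
  have hnq_le : n - q ≤ n := Nat.sub_le n q
  have hq_le_n : q ≤ n := le_trans hq2 hnq_le
  have hcardA : (Finset.univ.filter fun y : Fin n => (y : ℕ) < n - q).card = n - q :=
    card_filter_val_lt n (n - q) hnq_le
  have hcardB : (Finset.univ.filter fun y : Fin n => ¬ (y : ℕ) < n - q).card = q := by
    have := Finset.card_filter_add_card_filter_not
      (s := (Finset.univ : Finset (Fin n))) (fun y : Fin n => (y : ℕ) < n - q)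
    rw [hcardA, Finset.card_univ, Fintype.card_fin] at this
    omega
  have hKL : K.card = L.card := by
    have h1 : (Finset.univ.filter fun y : Fin n => (σ y : ℕ) < n - q).card
        = (Finset.univ.filter fun y : Fin n => (y : ℕ) < n - q).card :=
      filter_perm_card σ (fun y : Fin n => (y : ℕ) < n - q)
    have h2 : ((Finset.univ.filter fun y : Fin n => (y : ℕ) < n - q).filter
        fun y : Fin n => (σ y : ℕ) < n - q).card + K.card
        = (Finset.univ.filter fun y : Fin n => (y : ℕ) < n - q).card := by
      rw [hK]
      rw [← Finset.filter_filter]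
      exact Finset.card_filter_add_card_filter_not _
    have h3 : ((Finset.univ.filter fun y : Fin n => (σ y : ℕ) < n - q).filter
        fun y : Fin n => (y : ℕ) < n - q).card + L.card
        = (Finset.univ.filter fun y : Fin n => (σ y : ℕ) < n - q).card := by
      have heq : (Finset.univ.filter fun y : Fin n => ¬ (y : ℕ) < n - q ∧ (σ y : ℕ) < n - q)
          = (Finset.univ.filter fun y : Fin n => (σ y : ℕ) < n - q).filter
            fun y : Fin n => ¬ (y : ℕ) < n - q := by
        rw [Finset.filter_filter]
        apply Finset.filter_congr
        intro x _
        tauto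
      rw [hL, heq]
      exact Finset.card_filter_add_card_filter_not _
    have h4 : ((Finset.univ.filter fun y : Fin n => (y : ℕ) < n - q).filter
        fun y : Fin n => (σ y : ℕ) < n - q)
        = ((Finset.univ.filter fun y : Fin n => (σ y : ℕ) < n - q).filter
        fun y : Fin n => (y : ℕ) < n - q) := by
      rw [Finset.filter_filter, Finset.filter_filter]
      apply Finset.filter_congr
      intro x _
      tauto
    rw [h4] at h2
    omega
  have hdq : K.card ≤ q := by
    rw [hKL]
    calc L.card ≤ (Finset.univ.filter fun y : Fin n => ¬ (y : ℕ) < n - q).card := by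
          apply Finset.card_le_card
          intro x hx
          simp only [hL, Finset.mem_filter] at hx ⊢
          exact ⟨hx.1, hx.2.1⟩
      _ = q := hcardB
  -- the representative
  set d : ℕ := K.card with hd
  have hKd : K.card = d := hd.symm
  have hLd : L.card = d := hKL.symm
  set k : Fin d → Fin n := ⇑(K.orderEmbOfFin hKd) with hkdef
  set l : Fin d → Fin n := ⇑(L.orderEmbOfFin hLd) with hldef
  have hkmem : ∀ i, k i ∈ K := fun i => K.orderEmbOfFin_mem hKd i
  have hlmem : ∀ i, l i ∈ L := fun i => L.orderEmbOfFin_mem hLd i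
  have hkA : ∀ i, (k i : ℕ) < n - q := fun i => (Finset.mem_filter.mp (hkmem i)).2.1
  have hkB : ∀ i, ¬ (σ (k i) : ℕ) < n - q := fun i => (Finset.mem_filter.mp (hkmem i)).2.2
  have hlB : ∀ i, ¬ (l i : ℕ) < n - q := fun i => (Finset.mem_filter.mp (hlmem i)).2.1
  have hlA : ∀ i, (σ (l i) : ℕ) < n - q := fun i => (Finset.mem_filter.mp (hlmem i)).2.2
  have hkmono : StrictMono k := (K.orderEmbOfFin hKd).strictMono
  have hlmono : StrictMono l := (L.orderEmbOfFin hLd).strictMono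
  have hkl : ∀ i j, k i ≠ l j := by
    intro i j h
    exact hlB j (h ▸ hkA i)
  have hrangek : ∀ y, y ∈ K ↔ ∃ i, k i = y := by
    intro y
    constructor
    · intro hy
      have : (y : Fin n) ∈ Set.range k := by
        rw [hkdef, Finset.range_orderEmbOfFin]
        exact hy
      exact this
    · rintro ⟨i, rfl⟩; exact hkmem i
  have hrangel : ∀ y, y ∈ L ↔ ∃ i, l i = y := by
    intro y
    constructor
    · intro hy
      have : (y : Fin n) ∈ Set.range l := by
        rw [hldef, Finset.range_orderEmbOfFin]
        exact hy
      exact this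
    · rintro ⟨i, rfl⟩; exact hlmem i
  obtain ⟨S1, S2, S3⟩ := prodSwap_spec k l hkmono.injective hlmono.injective hkl
  set s : Equiv.Perm (Fin n) := (List.ofFn fun i => Equiv.swap (k i) (l i)).prod with hs
  have hsmem : s ∈ transpositionReps n q :=
    ⟨d, hdq, k, l, hkmono, hlmono, hkA, fun i => not_lt.mp (hlB i), rfl⟩
  have hsy : ∀ y, ((s y : ℕ) < n - q ↔ (σ y : ℕ) < n - q) := by
    intro y
    by_cases h1 : ∃ i, k i = y
    · obtain ⟨i, rfl⟩ := h1
      rw [hs, S1 i]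
      constructor
      · intro h; exact absurd h (hlB i)
      · intro h; exact absurd h (hkB i)
    · by_cases h2 : ∃ i, l i = y
      · obtain ⟨i, rfl⟩ := h2
        rw [hs, S2 i]
        exact ⟨fun _ => hlA i, fun _ => hkA i⟩
      · have hyK : y ∉ K := fun h => h1 ((hrangek y).mp h)
        have hyL : y ∉ L := fun h => h2 ((hrangel y).mp h)
        simp only [hK, hL, Finset.mem_filter, Finset.mem_univ, true_and, not_and] at hyK hyL
        rw [hs, S3 y (fun i h => h1 ⟨i, h.symm⟩) (fun i h => h2 ⟨i, h.symm⟩)]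
        tauto
  refine ⟨s, ⟨hsmem, (mem_young_iff σ s).mpr hsy⟩, ?_⟩
  rintro s' ⟨⟨d', hd'q, k', l', hk'm, hl'm, hkA', hlB', rfl⟩, hy'⟩
  have hy' : ∀ y, (((List.ofFn fun i => Equiv.swap (k' i) (l' i)).prod y : ℕ) < n - q
      ↔ (σ y : ℕ) < n - q) := (mem_young_iff σ _).mp hy'
  have hkl' : ∀ i j, k' i ≠ l' j := by
    intro i j h
    have := hkA' i
    rw [h] at this
    exact absurd (hlB' j) (not_le.mpr this)
  obtain ⟨T1, T2, T3⟩ := prodSwap_spec k' l' hk'm.injective hl'm.injective hkl'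
  -- range of k' is K
  have hk'K : ∀ i, k' i ∈ K := by
    intro i
    simp only [hK, Finset.mem_filter, Finset.mem_univ, true_and]
    refine ⟨hkA' i, ?_⟩
    intro h
    rw [← hy' (k' i), T1 i] at h
    exact absurd (hlB' i) (not_le.mpr h)
  have hKk' : ∀ y ∈ K, ∃ i, k' i = y := by
    intro y hy
    simp only [hK, Finset.mem_filter, Finset.mem_univ, true_and] at hy
    by_contra hc
    push_neg at hc
    by_cases h2 : ∃ i, l' i = y
    · obtain ⟨i, rfl⟩ := h2
      exact absurd (hlB' i) (not_le.mpr hy.1)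
    · have := T3 y (fun i h => hc i h.symm) (fun i h => h2 ⟨i, h.symm⟩)
      rw [← hy' y, this] at hy
      exact hy.2 hy.1
  have hKim : K = Finset.univ.image k' := by
    ext y
    simp only [Finset.mem_image, Finset.mem_univ, true_and]
    exact ⟨fun h => hKk' y h, fun ⟨i, hi⟩ => hi ▸ hk'K i⟩
  have hdd : d' = d := by
    have hc : K.card = d' := by
      rw [hKim, Finset.card_image_of_injective _ hk'm.injective, Finset.card_univ,
        Fintype.card_fin]
    omega
  subst hdd
  -- k' = k
  have hk'eq : k' = k := by
    rw [hkdef]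
    exact Finset.orderEmbOfFin_unique hKd hk'K hk'm
  -- range of l' is L
  have hl'L : ∀ i, l' i ∈ L := by
    intro i
    simp only [hL, Finset.mem_filter, Finset.mem_univ, true_and]
    refine ⟨not_lt.mpr (hlB' i), ?_⟩
    rw [← hy' (l' i), T2 i]
    exact hkA' i
  have hl'eq : l' = l := by
    rw [hldef]
    exact Finset.orderEmbOfFin_unique hLd hl'L hl'm
  rw [hk'eq, hl'eq]
end

section
/- Let λ = (λ_1 ≥ ⋯ ≥ λ_j > 0) be a partition of n with j parts, let G = S_{n-q} × S_q ≤ S_n with n-q ≥ q, and suppose j ≥ q+1. If some part λ_a ≥ 3 with a ≥ q+1, then for every s ∈ S_n there exists an index i and a cycle c of length λ_i ≥ 3 in the standard cycle decomposition c_λ such that s·c·s⁻¹ ∈ G. -/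
open scoped Pointwise

/-- The interval `{L, L+1, …, L+len-1}` inside `Fin n`, identified with `Fin len`. -/
def intervalEquiv (n L len : ℕ) (h : L + len ≤ n) :
    Fin len ≃ {x : Fin n // L ≤ (x : ℕ) ∧ (x : ℕ) < L + len} where
  toFun i := ⟨⟨L + i.1, by have := i.2; omega⟩, by
    constructor <;> simp⟩
  invFun x := ⟨x.1.1 - L, by have h1 := x.2.1; have h2 := x.2.2; omega⟩
  left_inv i := by
    apply Fin.ext
    simp
  right_inv x := by
    apply Subtype.ext
    apply Fin.ext
    have h1 := x.2.1
    simp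
    omega

/-- The standard cycle `(L+1, L+2, …, L+len)` (in 1-based notation) of length `len`
on a consecutive interval, as a permutation of `Fin n`. -/
def intervalCycle (n L len : ℕ) : Equiv.Perm (Fin n) :=
  if h : L + len ≤ n then (finRotate len).extendDomain (intervalEquiv n L len h) else 1

/-!
The conjugate `s c s⁻¹` of a cycle `c` of `c_λ` moves only points of `s '' I`, where `I` is
the interval on which `c` acts; so it lies in `G` as soon as `s` maps `I` into `{x < n - q}`.
The intervals of the first `q + 1` cycles are pairwise disjoint while only `q` points are sent
outside `{x < n - q}`, so by pigeonhole one of these intervals is mapped inside it; since the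
parts are sorted and `λ_a ≥ 3` with `a ≥ q`, that cycle has length at least `3`.
-/

open Equiv MulAction Function

theorem intervalCycle_apply_of_not_mem {n L len : ℕ} {x : Fin n}
    (hx : ¬(L ≤ (x : ℕ) ∧ (x : ℕ) < L + len)) : intervalCycle n L len x = x := by
  unfold intervalCycle
  split_ifs
  · exact Perm.extendDomain_apply_not_subtype _ _ hx
  · rfl

theorem Equiv.Perm.conj_mem_stabilizer_of_mapsTo {α : Type*} {s c : Perm α} {I A : Set α}
    (hc : ∀ x ∉ I, c x = x) (hs : Set.MapsTo s I A) :
    s * c * s⁻¹ ∈ stabilizer (Perm α) A := by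
  rw [← stabilizer_compl]
  refine fixingSubgroup_le_stabilizer _ _ ((mem_fixingSubgroup_iff _).2 fun y hy => ?_)
  have hy' : s⁻¹ y ∉ I := fun h => hy (by simpa using hs h)
  rw [Perm.smul_def, Perm.mul_apply, Perm.mul_apply, hc _ hy']
  exact s.apply_symm_apply y

theorem List.sum_take_add_getElem_le_sum_take (l : List ℕ) {u v : ℕ} (hu : u < l.length)
    (huv : u < v) : (l.take u).sum + l[u] ≤ (l.take v).sum :=
  l.sum_take_succ u hu ▸ l.monotone_sum_take huv

theorem List.pairwise_disjoint_Ico_sum_take (l : List ℕ) :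
    _root_.Pairwise (_root_.Disjoint on fun i : Fin l.length =>
      Set.Ico (l.take i).sum ((l.take i).sum + l[i])) :=
  (pairwise_disjoint_on _).2 fun i _ hij => Set.Ico_disjoint_Ico_same.mono_right
    (Set.Ico_subset_Ico_left (l.sum_take_add_getElem_le_sum_take i.2 hij))

theorem Fintype.exists_disjoint_of_card_lt {ι α : Type*} [Fintype ι] {I : ι → Set α}
    (hI : Pairwise (Disjoint on I)) (B : Finset α) (hB : B.card < Fintype.card ι) :
    ∃ i, Disjoint (I i) B := by
  by_contra! h
  choose g hgI hgB using fun i => Set.not_disjoint_iff.1 (h i)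
  obtain ⟨i, j, hij, hg⟩ := Fintype.exists_ne_map_eq_of_card_lt
    (fun i => (⟨g i, hgB i⟩ : B)) (by simpa using hB)
  exact Set.disjoint_left.1 (hI hij) (hgI i)
    (by rw [show g i = g j from congrArg Subtype.val hg]; exact hgI j)

theorem Fin.card_filter_sub_le_val_le (n m : ℕ) :
    (Finset.univ.filter fun y : Fin n => n - m ≤ (y : ℕ)).card ≤ m := by
  have := Finset.card_filter_add_card_filter_not (s := Finset.univ)
    (fun y : Fin n => (y : ℕ) < n - m)
  simp only [not_lt] at this
  rw [Fin.card_filter_val_lt, Finset.card_univ, Fintype.card_fin] at this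
  omega

theorem stmt_13_general (n q : ℕ) (parts : List ℕ)
    (hsorted : parts.Pairwise (· ≥ ·))
    (hlen : q + 1 ≤ parts.length)
    (a : Fin parts.length) (haq : q ≤ (a : ℕ)) (ha3 : 3 ≤ parts.get a)
    (s : Equiv.Perm (Fin n)) :
    ∃ i : Fin parts.length, 3 ≤ parts.get i ∧
      s * intervalCycle n ((parts.take (i : ℕ)).sum) (parts.get i) * s⁻¹ ∈
        MulAction.stabilizer (Equiv.Perm (Fin n))
          ({x : Fin n | (x : ℕ) < n - q} : Set (Fin n)) := by
  classical
  let block (k : Fin (q + 1)) : Set (Fin n) :=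
    Fin.val ⁻¹' Set.Ico (parts.take k).sum ((parts.take k).sum + parts[Fin.castLE hlen k])
  have hdisj : Pairwise (Disjoint on fun k => s '' block k) := fun k l hkl =>
    (Set.disjoint_image_iff s.injective).2 <| (parts.pairwise_disjoint_Ico_sum_take
      ((Fin.castLE_injective hlen).ne hkl)).preimage _
  obtain ⟨k, hk⟩ := Fintype.exists_disjoint_of_card_lt hdisj _
    ((Fin.card_filter_sub_le_val_le n q).trans_lt (by simp))
  refine ⟨Fin.castLE hlen k, ?_, ?_⟩
  · exact ha3.trans (hsorted.rel_get_of_le (Fin.le_def.2 (by simp only [Fin.val_castLE]; omega)))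
  · refine Perm.conj_mem_stabilizer_of_mapsTo (I := block k)
      (fun x hx => intervalCycle_apply_of_not_mem hx) fun x hx => ?_
    by_contra hsx
    exact Set.disjoint_left.1 hk (Set.mem_image_of_mem s hx) (by simpa using hsx)

/-- Lemma 2.3(1): let `λ = (λ₁ ≥ ⋯ ≥ λ_j > 0)` be a partition of `n` with `j ≥ q+1`
parts, `G = S_{n-q} × S_q ≤ S_n` with `n - q ≥ q`, and suppose some part `λ_a ≥ 3`
with (0-based) index `a ≥ q`. Then for every `s ∈ S_n` there is an index `i` whose
part satisfies `λ_i ≥ 3` such that the conjugate by `s` of the `i`-th cycle of the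
standard element `c_λ` lies in `G`. -/
theorem stmt_13 (n q : ℕ) (parts : List ℕ) (hsum : parts.sum = n)
    (hpos : ∀ x ∈ parts, 0 < x) (hsorted : parts.Pairwise (· ≥ ·))
    (hq : q ≤ n - q) (hlen : q + 1 ≤ parts.length)
    (a : Fin parts.length) (haq : q ≤ (a : ℕ)) (ha3 : 3 ≤ parts.get a)
    (s : Equiv.Perm (Fin n)) :
    ∃ i : Fin parts.length, 3 ≤ parts.get i ∧
      s * intervalCycle n ((parts.take (i : ℕ)).sum) (parts.get i) * s⁻¹ ∈
        MulAction.stabilizer (Equiv.Perm (Fin n))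
          ({x : Fin n | (x : ℕ) < n - q} : Set (Fin n)) :=
  stmt_13_general n q parts hsorted hlen a haq ha3 s
end
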